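/- arXiv:2007.11039 — 8 statements merged into one kernel-verified Lean document; each statement's English description precedes it below -/
import Mathlib

section
/- For every integer g ≥ 1, the continued fraction identity (4g+3)/(3g+2) = [2, 2, 3, 2, 2, ..., 2]^- holds, where there are g-1 twos following the 3. -/
/-- Negative continued fraction `[x_1, ..., x_n]^- = x_1 - 1/(x_2 - 1/(... - 1/x_n))`. -/
def ncf : List ℤ → ℚ
  | [] => 0
  | [x] => (x : ℚ)
  | x :: xs => (x : ℚ) - 1 / ncf xs

-- Holds also for `xs = []`, since `ncf [] = 0` and `0⁻¹ = 0` in `ℚ`.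
theorem ncf_cons (x : ℤ) (xs : List ℤ) : ncf (x :: xs) = x - (ncf xs)⁻¹ := by
  cases xs with
  | nil => simp [ncf]
  | cons y ys => simp [ncf]

-- For `k = 0` both sides are `0` by the junk value of division.
theorem ncf_replicate_two (k : ℕ) : ncf (List.replicate k 2) = ((k : ℚ) + 1) / k := by
  induction k with
  | zero => simp [ncf]
  | succ k ih =>
    rw [List.replicate_succ, ncf_cons, ih]
    rcases k.eq_zero_or_pos with rfl | hk
    · norm_num
    · have hk : (k : ℚ) ≠ 0 := by positivity
      field_simp
      push_cast
      ring

theorem stmt_2 (g : ℕ) (hg : 1 ≤ g) :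
    ncf (2 :: 2 :: 3 :: List.replicate (g - 1) 2) = (4 * (g : ℚ) + 3) / (3 * (g : ℚ) + 2) := by
  obtain ⟨k, rfl⟩ := Nat.exists_eq_add_of_le' hg
  have h₃ : ncf (3 :: List.replicate k 2) = (2 * (k : ℚ) + 3) / (k + 1) := by
    rw [ncf_cons, ncf_replicate_two, inv_div]
    field_simp
    ring
  have h₂₃ : ncf (2 :: 3 :: List.replicate k 2) = (3 * (k : ℚ) + 5) / (2 * k + 3) := by
    rw [ncf_cons, h₃, inv_div]
    field_simp
    ring
  rw [Nat.add_sub_cancel, ncf_cons, h₂₃, inv_div]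
  push_cast
  field_simp
  ring
end

section
/- Let σ ∈ ℤ^{n+1} be a vector of nonnegative integers with σ_0 ≤ σ_1 ≤ ... ≤ σ_n. Then σ is a changemaker if and only if for every integer j with |j| ≤ σ_0 + ... + σ_n and j ≡ σ_0 + ... + σ_n (mod 2), there exists a choice of signs ε_i ∈ {±1} such that Σ ε_i σ_i = j. -/
/-!
A choice of signs `ε` corresponds to the set `A = {i | ε i = -1}`, and
`∑ ε i * σ i = N - 2 * ∑_{i ∈ A} σ i` with `N = ∑ σ i`; so the signed-sum condition says that
every `0 ≤ t ≤ N` is a subset sum of `σ`. The changemaker inequalities give this by induction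
on the number of coins (the new coin `σ m` is at most one more than everything made so far).
Conversely, if `σ i > σ 0 + ... + σ (i-1) + 1`, then by monotonicity every `σ k` with `k ≥ i`
exceeds `t = σ 0 + ... + σ (i-1) + 1`, so `t` is not a subset sum.
-/

/-- `σ` (indices `0..n`) is a changemaker vector: `σ 0 ≤ 1` and
`σ (i-1) ≤ σ i ≤ σ 0 + ... + σ (i-1) + 1` for `1 ≤ i ≤ n`. -/
def IsChangemaker (n : ℕ) (σ : ℕ → ℕ) : Prop :=
  σ 0 ≤ 1 ∧ ∀ i, 1 ≤ i → i ≤ n →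
    σ (i - 1) ≤ σ i ∧ σ i ≤ (∑ j ∈ Finset.range i, σ j) + 1

open Finset

lemma sum_sign_mul_eq {ι : Type*} {s : Finset ι} {ε : ι → ℤ}
    (hε : ∀ i ∈ s, ε i = 1 ∨ ε i = -1) (f : ι → ℤ) :
    ∑ i ∈ s, ε i * f i = ∑ i ∈ s, f i - 2 * ∑ i ∈ s with ε i = -1, f i := by
  have hneg : ∑ i ∈ s with ε i = -1, ε i * f i = -∑ i ∈ s with ε i = -1, f i := by
    rw [← sum_neg_distrib]
    exact sum_congr rfl fun i hi ↦ by simp [(mem_filter.mp hi).2]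
  have hpos : ∑ i ∈ s with ¬ε i = -1, ε i * f i = ∑ i ∈ s with ¬ε i = -1, f i := by
    refine sum_congr rfl fun i hi ↦ ?_
    obtain ⟨his, hi⟩ := mem_filter.mp hi
    simp [(hε i his).resolve_right hi]
  rw [← sum_filter_add_sum_filter_not s (ε · = -1), hneg, hpos,
    ← sum_filter_add_sum_filter_not s (ε · = -1) f]
  ring

theorem forall_exists_signed_sum_iff {ι : Type*} (s : Finset ι) (f : ι → ℕ) :
    (∀ j : ℤ, |j| ≤ ∑ i ∈ s, (f i : ℤ) → j % 2 = (∑ i ∈ s, (f i : ℤ)) % 2 →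
      ∃ ε : ι → ℤ, (∀ i ∈ s, ε i = 1 ∨ ε i = -1) ∧ ∑ i ∈ s, ε i * f i = j) ↔
    ∀ t ≤ ∑ i ∈ s, f i, ∃ A ⊆ s, ∑ i ∈ A, f i = t := by
  classical
  simp only [← Nat.cast_sum]
  constructor
  · intro h t ht
    obtain ⟨ε, hε, hsum⟩ := h ((∑ i ∈ s, f i : ℕ) - 2 * t) (by rw [abs_le]; omega) (by omega)
    refine ⟨s.filter (ε · = -1), filter_subset _ _, ?_⟩
    rw [sum_sign_mul_eq hε, ← Nat.cast_sum, ← Nat.cast_sum] at hsum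
    omega
  · intro h j hj hpar
    rw [abs_le] at hj
    obtain ⟨A, hA, hAsum⟩ := h ((∑ i ∈ s, f i - j) / 2).toNat (by omega)
    have hsign : ∀ i ∈ s,
        (if i ∈ A then -1 else 1 : ℤ) = 1 ∨ (if i ∈ A then -1 else 1 : ℤ) = -1 :=
      fun i _ ↦ by split_ifs <;> simp
    refine ⟨fun i ↦ if i ∈ A then -1 else 1, hsign, ?_⟩
    have hfilter : s.filter (fun i ↦ (if i ∈ A then -1 else 1 : ℤ) = -1) = A := by
      ext i
      by_cases hi : i ∈ A
      · simp [hi, hA hi]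
      · simp [hi]
    rw [sum_sign_mul_eq hsign, hfilter, ← Nat.cast_sum, ← Nat.cast_sum, hAsum]
    omega

theorem exists_subset_range_sum_eq {σ : ℕ → ℕ} {m : ℕ}
    (h : ∀ i < m, σ i ≤ ∑ j ∈ range i, σ j + 1) :
    ∀ t ≤ ∑ j ∈ range m, σ j, ∃ A ⊆ range m, ∑ i ∈ A, σ i = t := by
  induction m with
  | zero => exact fun t ht ↦ ⟨∅, empty_subset _, by simp at ht ⊢; omega⟩
  | succ m ih =>
    have ih := ih fun i hi ↦ h i (by omega)
    have hm := h m (by omega)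
    intro t ht
    rw [sum_range_succ] at ht
    by_cases hsmall : t ≤ ∑ j ∈ range m, σ j
    · obtain ⟨A, hA, hAsum⟩ := ih t hsmall
      exact ⟨A, hA.trans (range_subset_range.mpr m.le_succ), hAsum⟩
    · obtain ⟨A, hA, hAsum⟩ := ih (t - σ m) (by omega)
      refine ⟨insert m A, range_add_one ▸ insert_subset_insert m hA, ?_⟩
      rw [sum_insert fun hmA ↦ notMem_range_self (hA hmA), hAsum]
      omega

theorem le_sum_range_add_one_of_forall_exists_subset_sum {σ : ℕ → ℕ} {m : ℕ}
    (hmono : MonotoneOn σ (Set.Iio m))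
    (h : ∀ t ≤ ∑ j ∈ range m, σ j, ∃ A ⊆ range m, ∑ i ∈ A, σ i = t) :
    ∀ i < m, σ i ≤ ∑ j ∈ range i, σ j + 1 := by
  intro i him
  by_contra! hbig
  have hle_total : ∑ j ∈ range (i + 1), σ j ≤ ∑ j ∈ range m, σ j :=
    sum_le_sum_of_subset (range_subset_range.mpr him)
  rw [sum_range_succ] at hle_total
  obtain ⟨A, hA, hAsum⟩ := h (∑ j ∈ range i, σ j + 1) (by omega)
  have hAi : A ⊆ range i := fun k hk ↦ mem_range.mpr <| by
    by_contra! hik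
    have hkm : k < m := mem_range.mp (hA hk)
    have : σ k ≤ ∑ j ∈ range i, σ j + 1 := hAsum ▸ single_le_sum (fun _ _ ↦ Nat.zero_le _) hk
    have : σ i ≤ σ k := hmono him hkm hik
    omega
  have := hAsum ▸ sum_le_sum_of_subset hAi
  omega

theorem isChangemaker_iff {n : ℕ} {σ : ℕ → ℕ} (hmono : ∀ i < n, σ i ≤ σ (i + 1)) :
    IsChangemaker n σ ↔ ∀ i < n + 1, σ i ≤ ∑ j ∈ range i, σ j + 1 := by
  constructor
  · rintro ⟨h0, h⟩ i hi
    rcases i with _ | i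
    · simpa using h0
    · exact (h (i + 1) (by omega) (by omega)).2
  · intro h
    refine ⟨by simpa using h 0 (by omega), fun i hi1 hin ↦ ⟨?_, h i (by omega)⟩⟩
    obtain ⟨i, rfl⟩ := Nat.exists_eq_add_of_le' hi1
    exact hmono i (by omega)

theorem stmt_4 (n : ℕ) (σ : ℕ → ℕ) (hmono : ∀ i, i < n → σ i ≤ σ (i + 1)) :
    IsChangemaker n σ ↔
      ∀ j : ℤ, |j| ≤ (∑ i ∈ Finset.range (n + 1), (σ i : ℤ)) →
        j % 2 = (∑ i ∈ Finset.range (n + 1), (σ i : ℤ)) % 2 →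
        ∃ ε : ℕ → ℤ, (∀ i ≤ n, ε i = 1 ∨ ε i = -1) ∧
          ∑ i ∈ Finset.range (n + 1), ε i * (σ i : ℤ) = j := by
  have hmonoOn : MonotoneOn σ (Set.Iio (n + 1)) :=
    monotoneOn_of_le_add_one Set.ordConnected_Iio fun i _ _ hi ↦
      hmono i (by simpa using hi)
  have hsigned := forall_exists_signed_sum_iff (range (n + 1)) σ
  simp only [mem_range, Nat.lt_succ_iff] at hsigned
  rw [isChangemaker_iff hmono, hsigned]
  exact ⟨exists_subset_range_sum_eq, le_sum_range_add_one_of_forall_exists_subset_sum hmonoOn⟩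
end

section
/- Let σ = (1, σ_1, ..., σ_n) be a changemaker vector with some σ_t ≥ 3, and let t be the minimum index with σ_t ≥ 3. Then there exists a subset A ⊆ {0, 1, ..., n} with t ∉ A such that Σ_{k∈A} σ_k = σ_t − 3. -/
/-!
If every term of a sequence is at most one more than the sum of the terms before it, then
every number up to the sum of its first `t` terms is a subset sum of those terms: take the
last term whenever the target exceeds the sum of the others. For a changemaker vector,
`σ t - 3 < σ t ≤ σ 0 + ⋯ + σ (t - 1) + 1`, so `σ t - 3` is a subset sum of `σ 0, …, σ (t - 1)`.
-/

open Finset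

theorem IsChangemaker.le_sum_range_add_one {n : ℕ} {σ : ℕ → ℕ} (h : IsChangemaker n σ)
    {i : ℕ} (hi : i ≤ n) : σ i ≤ ∑ j ∈ range i, σ j + 1 := by
  rcases Nat.eq_zero_or_pos i with rfl | hpos
  · simpa using h.1
  · exact (h.2 i hpos hi).2

theorem exists_subset_range_sum_eq_of_le_sum_add_one {σ : ℕ → ℕ} {N : ℕ}
    (hσ : ∀ i < N, σ i ≤ ∑ j ∈ range i, σ j + 1) {m : ℕ} (hm : m ≤ ∑ j ∈ range N, σ j) :
    ∃ A ⊆ range N, ∑ k ∈ A, σ k = m := by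
  induction N generalizing m with
  | zero => exact ⟨∅, empty_subset _, by simp_all⟩
  | succ N ih =>
    have hσ' : ∀ i < N, σ i ≤ ∑ j ∈ range i, σ j + 1 := fun i hi => hσ i (by omega)
    have hsub : range N ⊆ range (N + 1) := range_subset_range.mpr N.le_succ
    rw [sum_range_succ] at hm
    by_cases hsmall : m ≤ ∑ j ∈ range N, σ j
    · obtain ⟨A, hA, hsum⟩ := ih hσ' hsmall
      exact ⟨A, hA.trans hsub, hsum⟩
    · have hlast := hσ N N.lt_succ_self
      obtain ⟨A, hA, hsum⟩ := ih hσ' (m := m - σ N) (by omega)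
      have hNA : N ∉ A := fun hN => by simpa using hA hN
      refine ⟨insert N A, insert_subset (self_mem_range_succ N) (hA.trans hsub), ?_⟩
      rw [sum_insert hNA, hsum]
      omega

theorem stmt_6_general (n : ℕ) (σ : ℕ → ℕ) (h : IsChangemaker n σ)
    (t : ℕ) (ht : t ≤ n) :
    ∃ A ⊆ Finset.range (n + 1), t ∉ A ∧ ∑ k ∈ A, σ k = σ t - 3 := by
  have hbound := h.le_sum_range_add_one ht
  obtain ⟨A, hA, hsum⟩ := exists_subset_range_sum_eq_of_le_sum_add_one
    (fun i hi => h.le_sum_range_add_one (hi.le.trans ht)) (m := σ t - 3) (by omega)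
  exact ⟨A, hA.trans (range_subset_range.mpr (by omega)), fun htA => by simpa using hA htA, hsum⟩

theorem stmt_6 (n : ℕ) (σ : ℕ → ℕ) (h : IsChangemaker n σ) (h0 : σ 0 = 1)
    (t : ℕ) (ht : t ≤ n) (h3 : 3 ≤ σ t) (hmin : ∀ i < t, σ i < 3) :
    ∃ A ⊆ Finset.range (n + 1), t ∉ A ∧ ∑ k ∈ A, σ k = σ t - 3 :=
  stmt_6_general n σ h t ht
end

section
/- Let Δ(T) = (−1)^r + Σ_{j=1}^{r} (−1)^{j−1}(T^{n_j} + T^{−n_j}) with integers n_1 > n_2 > ... > n_r > 0, and define the torsion coefficients t_i = Σ_{j≥1} j·a_{i+j} where a_m is the coefficient of T^m in Δ(T). Then for every i ≥ 0, t_i − t_{i+1} = Σ_{j : n_j ≥ i+1} (−1)^{j−1}, and this quantity equals 0 or 1. -/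
/-- Coefficient `a_m` of `T^m` in `Δ(T) = (-1)^r + ∑_{j=1}^r (-1)^{j-1}(T^{n_j} + T^{-n_j})`. -/
def coeff (r : ℕ) (nn : ℕ → ℕ) (m : ℤ) : ℤ :=
  (if m = 0 then (-1 : ℤ) ^ r else 0) +
    ∑ j ∈ Finset.Icc 1 r, if (nn j : ℤ) = |m| then (-1 : ℤ) ^ (j - 1) else 0

/-- The `i`-th torsion coefficient `t_i = ∑_{j ≥ 1} j · a_{i+j}`. -/
def tors (r : ℕ) (nn : ℕ → ℕ) (i : ℕ) : ℤ :=
  ∑ j ∈ Finset.range (nn 1 + 1), (j : ℤ) * coeff r nn ((i : ℤ) + j)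

/-- The exponent data of a Laurent polynomial of L-space-knot form:
`n_1 > n_2 > ... > n_r > 0`. -/
def LSpaceForm (r : ℕ) (nn : ℕ → ℕ) : Prop :=
  1 ≤ r ∧ (∀ j, 1 ≤ j → j ≤ r → 0 < nn j) ∧ ∀ j, 1 ≤ j → j + 1 ≤ r → nn (j + 1) < nn j

/- Since `a_m = 0` for `m > n_1`, summation by parts gives
`t_i - t_{i+1} = ∑_{m > i} a_m`, and grouping the terms of `Δ` by exponent turns this into the
signed count `∑_{n_j > i} (-1)^(j-1)`. As the `n_j` decrease, the indices `j` with `n_j > i` form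
an initial segment `{1, …, s}`, and the alternating sum `1 - 1 + 1 - ⋯` of `s` terms is `0` or `1`. -/

open Finset

lemma LSpaceForm.antitoneOn {r : ℕ} {nn : ℕ → ℕ} (h : LSpaceForm r nn) :
    AntitoneOn nn (Set.Icc 1 r) :=
  (strictAntiOn_of_add_one_lt Set.ordConnected_Icc fun j _ hj hj1 ↦
    h.2.2 j hj.1 hj1.2).antitoneOn

lemma coeff_of_pos (r : ℕ) (nn : ℕ → ℕ) {m : ℤ} (hm : 0 < m) :
    coeff r nn m = ∑ j ∈ Icc 1 r, if (nn j : ℤ) = m then (-1 : ℤ) ^ (j - 1) else 0 := by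
  rw [coeff, if_neg hm.ne', zero_add, abs_of_pos hm]

lemma coeff_eq_zero_of_lt {r : ℕ} {nn : ℕ → ℕ} (hnn : AntitoneOn nn (Set.Icc 1 r)) {m : ℤ}
    (hm : (nn 1 : ℤ) < m) : coeff r nn m = 0 := by
  have hm0 : 0 < m := (Int.natCast_nonneg _).trans_lt hm
  rw [coeff_of_pos r nn hm0]
  refine sum_eq_zero fun j hj ↦ if_neg ?_
  have hj' : 1 ≤ j ∧ j ≤ r := mem_Icc.mp hj
  have : nn j ≤ nn 1 := hnn ⟨le_rfl, hj'.1.trans hj'.2⟩ ⟨hj'.1, hj'.2⟩ hj'.1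
  omega

lemma sum_range_mul_sub_sum_range_mul_succ {R : Type*} [CommRing R] (f : ℕ → R) (n : ℕ)
    (hf : f (n + 1) = 0) :
    ∑ j ∈ range (n + 1), (j : R) * f j - ∑ j ∈ range (n + 1), (j : R) * f (j + 1) =
      ∑ j ∈ range (n + 1), f (j + 1) := by
  rw [sum_range_succ' (fun j ↦ (j : R) * f j), sum_range_succ (fun j ↦ (j : R) * f (j + 1)),
    sum_range_succ (fun j ↦ f (j + 1)), hf]
  simp only [Nat.cast_zero, zero_mul, add_zero, mul_zero, Nat.cast_succ, ← sum_sub_distrib]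
  exact sum_congr rfl fun j _ ↦ by ring

lemma tors_sub_tors_succ_eq_sum_coeff {r : ℕ} {nn : ℕ → ℕ} (hnn : AntitoneOn nn (Set.Icc 1 r))
    (i : ℕ) :
    tors r nn i - tors r nn (i + 1) = ∑ j ∈ range (nn 1 + 1), coeff r nn (i + (j + 1 : ℕ)) := by
  have hshift (j : ℕ) : ((i + 1 : ℕ) : ℤ) + j = i + (j + 1 : ℕ) := by push_cast; ring
  simp only [tors, hshift]
  exact sum_range_mul_sub_sum_range_mul_succ (fun j ↦ coeff r nn (i + j)) _
    (coeff_eq_zero_of_lt hnn (by omega))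

lemma sum_range_ite_eq_add_succ {M : Type*} [AddCommMonoid M] {a N : ℕ} (ha : a ≤ N) (i : ℕ)
    (c : M) :
    ∑ j ∈ range (N + 1), (if (a : ℤ) = i + (j + 1 : ℕ) then c else 0) =
      if i + 1 ≤ a then c else 0 := by
  split_ifs with hia
  · rw [sum_eq_single_of_mem (a - (i + 1)) (mem_range.mpr (by omega)) fun j _ hj ↦ if_neg ?_]
    · exact if_pos (by omega)
    · omega
  · exact sum_eq_zero fun j _ ↦ if_neg (by omega)

lemma tors_sub_tors_succ {r : ℕ} {nn : ℕ → ℕ} (hnn : AntitoneOn nn (Set.Icc 1 r)) (i : ℕ) :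
    tors r nn i - tors r nn (i + 1) =
      ∑ j ∈ Icc 1 r, if i + 1 ≤ nn j then (-1 : ℤ) ^ (j - 1) else 0 := by
  rw [tors_sub_tors_succ_eq_sum_coeff hnn,
    sum_congr rfl fun j _ ↦ coeff_of_pos r nn (by omega), sum_comm]
  refine sum_congr rfl fun k hk ↦ sum_range_ite_eq_add_succ ?_ i _
  have hk' : 1 ≤ k ∧ k ≤ r := mem_Icc.mp hk
  exact hnn ⟨le_rfl, hk'.1.trans hk'.2⟩ ⟨hk'.1, hk'.2⟩ hk'.1

lemma filter_Icc_one_eq_Icc_findGreatest {P : ℕ → Prop} [DecidablePred P] {r : ℕ}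
    (hP : ∀ a b, 1 ≤ a → a ≤ b → b ≤ r → P b → P a) :
    (Icc 1 r).filter P = Icc 1 (Nat.findGreatest P r) := by
  ext j
  simp only [mem_filter, mem_Icc]
  constructor
  · rintro ⟨⟨hj1, hjr⟩, hPj⟩
    exact ⟨hj1, Nat.le_findGreatest hjr hPj⟩
  · rintro ⟨hj1, hjs⟩
    have hsr : Nat.findGreatest P r ≤ r := Nat.findGreatest_le r
    exact ⟨⟨hj1, hjs.trans hsr⟩,
      hP j _ hj1 hjs hsr (Nat.findGreatest_of_ne_zero rfl (by omega))⟩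

lemma sum_Icc_one_neg_one_pow_eq_zero_or_one (s : ℕ) :
    ∑ j ∈ Icc 1 s, (-1 : ℤ) ^ (j - 1) = 0 ∨ ∑ j ∈ Icc 1 s, (-1 : ℤ) ^ (j - 1) = 1 := by
  have hrange : ∑ j ∈ Icc 1 s, (-1 : ℤ) ^ (j - 1) = ∑ j ∈ range s, (-1 : ℤ) ^ j := by
    rw [← Ico_add_one_right_eq_Icc, sum_Ico_eq_sum_range]
    simp
  rw [hrange, neg_one_geom_sum]
  split_ifs <;> simp

theorem stmt_7 (r : ℕ) (nn : ℕ → ℕ) (h : LSpaceForm r nn) (i : ℕ) :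
    tors r nn i - tors r nn (i + 1) =
      (∑ j ∈ Finset.Icc 1 r, if i + 1 ≤ nn j then (-1 : ℤ) ^ (j - 1) else 0) ∧
    ((∑ j ∈ Finset.Icc 1 r, if i + 1 ≤ nn j then (-1 : ℤ) ^ (j - 1) else 0) = 0 ∨
     (∑ j ∈ Finset.Icc 1 r, if i + 1 ≤ nn j then (-1 : ℤ) ^ (j - 1) else 0) = 1) := by
  have hnn := h.antitoneOn
  refine ⟨tors_sub_tors_succ hnn i, ?_⟩
  have hinit : (Icc 1 r).filter (fun j ↦ i + 1 ≤ nn j) =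
      Icc 1 (Nat.findGreatest (fun j ↦ i + 1 ≤ nn j) r) :=
    filter_Icc_one_eq_Icc_findGreatest fun a b ha hab hbr hb ↦
      hb.trans (hnn ⟨ha, hab.trans hbr⟩ ⟨ha.trans hab, hbr⟩ hab)
  rw [← sum_filter, hinit]
  exact sum_Icc_one_neg_one_pow_eq_zero_or_one _
end

section
/- With Δ(T) and torsion coefficients t_i as above, the sequence (t_i)_{i≥0} is a non-increasing sequence of nonnegative integers, and t_i = 0 if and only if i ≥ n_1. -/
/-!
Only the exponents `n_j ≥ i + 1` contribute to `t_i`, each with weight `n_j - i`, so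
`t_i = ∑_j (-1)^(j-1) max(n_j - i, 0)`, an alternating sum of a nonincreasing sequence, hence `≥ 0`.
Likewise `t_i - t_{i+1} = ∑_j (-1)^(j-1) [i < n_j]` is an alternating sum of a nonincreasing
0/1 sequence. Finally `t_i` vanishes once `i ≥ n_1`, while `t_{n_1 - 1} = 1`, so by monotonicity
`t_i ≥ 1` for `i < n_1`.
-/

open Finset

lemma sum_range_succ_alternating (a : ℕ → ℤ) (n : ℕ) :
    ∑ j ∈ range (n + 1), (-1 : ℤ) ^ j * a j =
      a 0 - ∑ j ∈ range n, (-1 : ℤ) ^ j * a (j + 1) := by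
  rw [sum_range_succ', add_comm, sub_eq_add_neg, ← sum_neg_distrib]
  simp [pow_succ]

lemma alternating_sum_range_nonneg_and_le (r : ℕ) (a : ℕ → ℕ)
    (ha : ∀ j, j + 1 < r → a (j + 1) ≤ a j) :
    0 ≤ ∑ j ∈ range r, (-1 : ℤ) ^ j * a j ∧ ∑ j ∈ range r, (-1 : ℤ) ^ j * a j ≤ a 0 := by
  induction r generalizing a with
  | zero => simp
  | succ n ih =>
    obtain ⟨hlo, hhi⟩ := ih (fun j ↦ a (j + 1)) fun j hj ↦ ha (j + 1) (by omega)
    rw [sum_range_succ_alternating (fun j ↦ (a j : ℤ))]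
    rcases n with _ | n
    · simp
    · have := ha 0 (by omega)
      constructor <;> omega

lemma sum_range_mul_ite_eq_add {N n : ℕ} (hn : n ≤ N) (i : ℕ) (c : ℤ) :
    ∑ k ∈ range (N + 1), (k : ℤ) * (if (n : ℤ) = i + k then c else 0) = ((n - i : ℕ) : ℤ) * c := by
  calc ∑ k ∈ range (N + 1), (k : ℤ) * (if (n : ℤ) = i + k then c else 0)
      = ∑ k ∈ range (N + 1), if n - i = k then ((n - i : ℕ) : ℤ) * c else 0 := by
        refine sum_congr rfl fun k _ ↦ ?_
        split_ifs with h₁ h₂ h₂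
        · rw [h₂]
        · omega
        · rw [show n - i = 0 by omega]; simp
        · rw [mul_zero]
    _ = ((n - i : ℕ) : ℤ) * c := by rw [sum_ite_eq, if_pos (mem_range.2 (by omega))]

namespace LSpaceForm

variable {r : ℕ} {nn : ℕ → ℕ}

lemma apply_lt_apply_one (h : LSpaceForm r nn) {j : ℕ} (hj : 2 ≤ j) (hjr : j ≤ r) :
    nn j < nn 1 := by
  induction j, hj using Nat.le_induction with
  | base => exact h.2.2 1 le_rfl hjr
  | succ j hj ih => exact (h.2.2 j (by omega) hjr).trans (ih (by omega))

lemma apply_le_apply_one (h : LSpaceForm r nn) {j : ℕ} (hj : 1 ≤ j) (hjr : j ≤ r) :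
    nn j ≤ nn 1 := by
  rcases hj.eq_or_lt with rfl | hj
  · exact le_rfl
  · exact (h.apply_lt_apply_one hj hjr).le

lemma tors_eq_alternating_sum (h : LSpaceForm r nn) (i : ℕ) :
    tors r nn i = ∑ j ∈ range r, (-1 : ℤ) ^ j * ((nn (j + 1) - i : ℕ) : ℤ) := by
  have hcoeff : ∀ k : ℕ, (k : ℤ) * coeff r nn (i + k) =
      ∑ j ∈ Icc 1 r, (k : ℤ) * if (nn j : ℤ) = i + k then (-1 : ℤ) ^ (j - 1) else 0 := by
    intro k
    have hcentral : (k : ℤ) * (if (i : ℤ) + k = 0 then (-1 : ℤ) ^ r else 0) = 0 := by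
      split_ifs with hik
      · rw [show (k : ℤ) = 0 by omega, zero_mul]
      · rw [mul_zero]
    rw [coeff, abs_of_nonneg (by positivity), mul_add, hcentral, zero_add, mul_sum]
  simp only [tors, hcoeff]
  rw [sum_comm, ← Ico_add_one_right_eq_Icc, sum_Ico_eq_sum_range, add_tsub_cancel_right]
  refine sum_congr rfl fun j hj ↦ ?_
  rw [sum_range_mul_ite_eq_add (h.apply_le_apply_one (by omega) (by simp at hj; omega)), add_comm,
    add_tsub_cancel_right, mul_comm]

lemma tors_nonneg (h : LSpaceForm r nn) (i : ℕ) : 0 ≤ tors r nn i := by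
  rw [h.tors_eq_alternating_sum]
  exact (alternating_sum_range_nonneg_and_le r (fun j ↦ nn (j + 1) - i)
    fun j hj ↦ Nat.sub_le_sub_right (h.2.2 (j + 1) (by omega) (by omega)).le i).1

lemma tors_succ_le (h : LSpaceForm r nn) (i : ℕ) : tors r nn (i + 1) ≤ tors r nn i := by
  have hstep : ∀ n : ℕ,
      ((n - i : ℕ) : ℤ) - ((n - (i + 1) : ℕ) : ℤ) = ((if i < n then 1 else 0 : ℕ) : ℤ) := by
    intro n
    split_ifs <;> omega
  rw [← sub_nonneg, h.tors_eq_alternating_sum, h.tors_eq_alternating_sum, ← sum_sub_distrib]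
  simp only [← mul_sub, hstep]
  refine (alternating_sum_range_nonneg_and_le r _ fun j hj ↦ ?_).1
  have := h.2.2 (j + 1) (by omega) (by omega)
  split_ifs <;> omega

lemma tors_eq_zero_of_le (h : LSpaceForm r nn) {i : ℕ} (hi : nn 1 ≤ i) : tors r nn i = 0 := by
  rw [h.tors_eq_alternating_sum]
  refine sum_eq_zero fun j hj ↦ ?_
  have := h.apply_le_apply_one (j := j + 1) (by omega) (by simp at hj; omega)
  simp [Nat.sub_eq_zero_of_le (this.trans hi)]

lemma tors_apply_sub_one (h : LSpaceForm r nn) : tors r nn (nn 1 - 1) = 1 := by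
  have hn1 := h.2.1 1 le_rfl h.1
  rw [h.tors_eq_alternating_sum, sum_eq_single_of_mem 0 (mem_range.2 h.1)]
  · rw [pow_zero, one_mul, Nat.sub_sub_self hn1, Nat.cast_one]
  · intro j hj hj0
    have := h.apply_lt_apply_one (j := j + 1) (by omega) (by simp at hj; omega)
    simp [Nat.sub_eq_zero_of_le (show nn (j + 1) ≤ nn 1 - 1 by omega)]

end LSpaceForm

theorem stmt_8 (r : ℕ) (nn : ℕ → ℕ) (h : LSpaceForm r nn) :
    (∀ i : ℕ, tors r nn (i + 1) ≤ tors r nn i) ∧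
    (∀ i : ℕ, 0 ≤ tors r nn i) ∧
    (∀ i : ℕ, tors r nn i = 0 ↔ nn 1 ≤ i) := by
  have hanti : Antitone (tors r nn) := antitone_nat_of_succ_le h.tors_succ_le
  refine ⟨h.tors_succ_le, h.tors_nonneg, fun i ↦ ⟨fun hi ↦ ?_, h.tors_eq_zero_of_le⟩⟩
  by_contra! hlt
  have := hanti (Nat.le_sub_one_of_lt hlt)
  rw [h.tors_apply_sub_one] at this
  omega
end

section
/- Let σ = (1, 2, 2, ..., 2) ∈ −ℤ^{n+1} with n ≥ 1 copies of 2. Then the orthogonal complement of σ in −ℤ^{n+1} is a rank-n lattice whose Gram matrix with respect to a suitable basis is the tridiagonal matrix with diagonal (−5, −2, ..., −2) and off-diagonal entries 1; i.e., it is isomorphic to the linear lattice Λ(4n+1, n). -/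
/-!
Write `e m` for `Pi.single m 1`. Since `σ 0 = 1`, the map `x ↦ x - (x ⬝ᵥ σ) • e 0` is a
projection onto `σ^⊥` killing `e 0`, so `σ^⊥` is spanned by the images `w m` of the `e m`, with
`w 0 = 0`, hence also by the differences `v k = w (k + 1) - w k`. These are linearly independent
because `x ↦ ∑_{m > j} x m` takes the value `δ_{jk}` on `v k`. For `σ = (1, 2, …, 2)` one finds
`v 0 = e 1 - 2 e 0` and `v k = e (k + 1) - e k` for `k ≥ 1`, whose Gram matrix is the
tridiagonal matrix with diagonal `(5, 2, …, 2)` and off-diagonal entries `-1`.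
-/

/-- The tridiagonal matrix with diagonal `d` and sub/super-diagonal entries `1`. -/
def triM (n : ℕ) (d : Fin n → ℤ) : Matrix (Fin n) (Fin n) ℤ :=
  fun i j => if i = j then d i
    else if (i : ℤ) - (j : ℤ) = 1 ∨ (j : ℤ) - (i : ℤ) = 1 then 1 else 0

open Matrix

namespace KerLattice

section General

variable {R : Type*} [CommRing R] {n : ℕ}

/-- For `σ 0 = 1`, the projection of `Pi.single m 1` onto the hyperplane `x ⬝ᵥ σ = 0` along
`Pi.single 0 1`. -/
def kerProjSingle (σ : Fin (n + 1) → R) (m : Fin (n + 1)) : Fin (n + 1) → R :=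
  Pi.single m 1 - σ m • Pi.single 0 1

def kerBasis (σ : Fin (n + 1) → R) (k : Fin n) : Fin (n + 1) → R :=
  kerProjSingle σ k.succ - kerProjSingle σ k.castSucc

variable {σ : Fin (n + 1) → R}

theorem kerProjSingle_dotProduct (hσ : σ 0 = 1) (m : Fin (n + 1)) :
    kerProjSingle σ m ⬝ᵥ σ = 0 := by
  simp [kerProjSingle, sub_dotProduct, hσ]

theorem kerProjSingle_zero (hσ : σ 0 = 1) : kerProjSingle σ 0 = 0 := by
  simp [kerProjSingle, hσ]

theorem kerProjSingle_mem_span (hσ : σ 0 = 1) (m : Fin (n + 1)) :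
    kerProjSingle σ m ∈ Submodule.span R (Set.range (kerBasis σ)) := by
  induction m using Fin.induction with
  | zero => simp [kerProjSingle_zero hσ]
  | succ k ih =>
    have hk : kerProjSingle σ k.succ = kerBasis σ k + kerProjSingle σ k.castSucc := by
      simp [kerBasis]
    rw [hk]
    exact add_mem (Submodule.subset_span ⟨k, rfl⟩) ih

theorem sub_dotProduct_smul_single_eq_sum (x : Fin (n + 1) → R) :
    x - (x ⬝ᵥ σ) • Pi.single 0 1 = ∑ m, x m • kerProjSingle σ m := by
  ext p
  simp [kerProjSingle, dotProduct, Finset.sum_apply, Pi.single_apply, mul_sub]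

theorem mem_span_kerBasis_iff (hσ : σ 0 = 1) (x : Fin (n + 1) → R) :
    x ∈ Submodule.span R (Set.range (kerBasis σ)) ↔ x ⬝ᵥ σ = 0 := by
  constructor
  · intro hx
    induction hx using Submodule.span_induction with
    | mem y hy =>
      obtain ⟨k, rfl⟩ := hy
      simp [kerBasis, sub_dotProduct, kerProjSingle_dotProduct hσ]
    | zero => simp
    | add y z _ _ hy hz => simp [add_dotProduct, hy, hz]
    | smul c y _ hy => simp [smul_dotProduct, hy]
  · intro hx
    have hsum := sub_dotProduct_smul_single_eq_sum (σ := σ) x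
    rw [hx, zero_smul, sub_zero] at hsum
    rw [hsum]
    exact Submodule.sum_mem _ fun m _ => Submodule.smul_mem _ _ (kerProjSingle_mem_span hσ m)

/-- Pairing with `tailIndicator j.castSucc` is the coordinate functional dual to `kerBasis σ j`. -/
def tailIndicator (j : Fin (n + 1)) : Fin (n + 1) → R := fun m => if j < m then 1 else 0

theorem kerProjSingle_dotProduct_tailIndicator (j m : Fin (n + 1)) :
    kerProjSingle σ m ⬝ᵥ tailIndicator j = if j < m then 1 else 0 := by
  simp [kerProjSingle, tailIndicator, sub_dotProduct]

theorem kerBasis_dotProduct_tailIndicator (i j : Fin n) :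
    kerBasis σ i ⬝ᵥ tailIndicator j.castSucc = if i = j then 1 else 0 := by
  simp only [kerBasis, sub_dotProduct, kerProjSingle_dotProduct_tailIndicator,
    Fin.castSucc_lt_succ_iff, Fin.castSucc_lt_castSucc_iff]
  split_ifs <;> grind

theorem linearIndependent_kerBasis : LinearIndependent R (kerBasis σ) := by
  rw [Fintype.linearIndependent_iff]
  intro g hg j
  have := congrArg (· ⬝ᵥ tailIndicator (R := R) j.castSucc) hg
  simpa [sum_dotProduct, smul_dotProduct, kerBasis_dotProduct_tailIndicator] using this

end General

variable {n : ℕ} {σ : Fin (n + 1) → ℤ}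

theorem kerBasis_eq_of_one_two (hσ : ∀ m, σ m = if (m : ℕ) = 0 then 1 else 2) (k : Fin n) :
    kerBasis σ k = Pi.single k.succ 1 - Pi.single k.castSucc (if (k : ℕ) = 0 then 2 else 1) := by
  ext p
  simp only [kerBasis, kerProjSingle, Pi.sub_apply, Pi.smul_apply, Pi.single_apply, hσ, Fin.ext_iff,
    Fin.val_succ, Fin.val_castSucc, Fin.val_zero, smul_eq_mul]
  split_ifs <;> simp_all

theorem neg_kerBasis_dotProduct_kerBasis_of_one_two
    (hσ : ∀ m, σ m = if (m : ℕ) = 0 then 1 else 2) (i j : Fin n) :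
    -(kerBasis σ i ⬝ᵥ kerBasis σ j) = triM n (fun i => if (i : ℕ) = 0 then -5 else -2) i j := by
  rw [kerBasis_eq_of_one_two hσ, kerBasis_eq_of_one_two hσ]
  simp only [sub_dotProduct, single_dotProduct, Pi.sub_apply, Pi.single_apply, triM,
    Fin.ext_iff, Fin.val_succ, Fin.val_castSucc]
  split_ifs <;> omega

end KerLattice

open KerLattice in
theorem stmt_11_general (n : ℕ) (σ : Fin (n + 1) → ℤ)
    (hσ : ∀ i, σ i = if (i : ℕ) = 0 then 1 else 2) :
    ∃ v : Fin n → (Fin (n + 1) → ℤ),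
      LinearIndependent ℤ v ∧
      (∀ x : Fin (n + 1) → ℤ,
        x ∈ Submodule.span ℤ (Set.range v) ↔ -(∑ i, x i * σ i) = 0) ∧
      ∀ i j : Fin n,
        -(∑ k, v i k * v j k) = triM n (fun i => if (i : ℕ) = 0 then -5 else -2) i j := by
  have hσ0 : σ 0 = 1 := by simp [hσ]
  refine ⟨kerBasis σ, linearIndependent_kerBasis, fun x => ?_,
    neg_kerBasis_dotProduct_kerBasis_of_one_two hσ⟩
  rw [neg_eq_zero]
  exact mem_span_kerBasis_iff hσ0 x

theorem stmt_11 (n : ℕ) (hn : 1 ≤ n) (σ : Fin (n + 1) → ℤ)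
    (hσ : ∀ i, σ i = if (i : ℕ) = 0 then 1 else 2) :
    ∃ v : Fin n → (Fin (n + 1) → ℤ),
      LinearIndependent ℤ v ∧
      (∀ x : Fin (n + 1) → ℤ,
        x ∈ Submodule.span ℤ (Set.range v) ↔ -(∑ i, x i * σ i) = 0) ∧
      ∀ i j : Fin n,
        -(∑ k, v i k * v j k) = triM n (fun i => if (i : ℕ) = 0 then -5 else -2) i j :=
  stmt_11_general n σ hσ
end

section
/- Let σ = (1, 1, 1, 2, ..., 2) ∈ −ℤ^{n+1} with n ≥ 3. Then the orthogonal complement of σ in −ℤ^{n+1} is a rank-n lattice whose Gram matrix with respect to a suitable basis is the tridiagonal matrix with diagonal (−2, −2, −3, −2, ..., −2) and off-diagonal entries 1; i.e., it is isomorphic to the linear lattice Λ(4(n−2)+3, 3(n−2)+2). -/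
open Matrix

section DualFamilies

variable {R ι κ : Type*} [CommRing R] [Fintype ι] [Fintype κ] [DecidableEq ι] [DecidableEq κ]
  {v y : ι → κ → R} {w σ : κ → R}

theorem sum_dotProduct_smul_add_eq_self (e : Option ι ≃ κ)
    (hvy : ∀ i j, v i ⬝ᵥ y j = if i = j then 1 else 0) (hvσ : ∀ i, v i ⬝ᵥ σ = 0)
    (hwy : ∀ j, w ⬝ᵥ y j = 0) (hwσ : w ⬝ᵥ σ = 1) (x : κ → R) :
    ∑ i, (x ⬝ᵥ y i) • v i + (x ⬝ᵥ σ) • w = x := by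
  let A : Matrix (Option ι) κ R := fun o => o.elim w v
  let B : Matrix κ (Option ι) R := (of fun o => o.elim σ y)ᵀ
  have hAB : A * B = 1 := by
    ext (_ | i) (_ | j) <;> rw [mul_apply'] <;> simp [A, B, hvy, hvσ, hwy, hwσ, one_apply]
  have hBA : B * A = 1 := (mul_eq_one_comm_of_equiv e).mp hAB
  calc ∑ i, (x ⬝ᵥ y i) • v i + (x ⬝ᵥ σ) • w = (x ᵥ* B) ᵥ* A := by
        rw [vecMul_eq_sum, Fintype.sum_option, add_comm]
        rfl
    _ = x := by rw [vecMul_vecMul, hBA, vecMul_one]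

omit [DecidableEq κ] in
theorem linearIndependent_of_dotProduct_eq_ite
    (hvy : ∀ i j, v i ⬝ᵥ y j = if i = j then 1 else 0) : LinearIndependent R v := by
  rw [Fintype.linearIndependent_iff]
  intro g hg j
  simpa [sum_dotProduct, smul_dotProduct, hvy] using congrArg (· ⬝ᵥ y j) hg

theorem mem_span_range_iff_dotProduct_eq_zero (e : Option ι ≃ κ)
    (hvy : ∀ i j, v i ⬝ᵥ y j = if i = j then 1 else 0) (hvσ : ∀ i, v i ⬝ᵥ σ = 0)
    (hwy : ∀ j, w ⬝ᵥ y j = 0) (hwσ : w ⬝ᵥ σ = 1) (x : κ → R) :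
    x ∈ Submodule.span R (Set.range v) ↔ x ⬝ᵥ σ = 0 := by
  rw [Submodule.mem_span_range_iff_exists_fun]
  constructor
  · rintro ⟨c, rfl⟩
    simp [sum_dotProduct, smul_dotProduct, hvσ]
  · intro hx
    refine ⟨fun i => x ⬝ᵥ y i, ?_⟩
    simpa [hx] using sum_dotProduct_smul_add_eq_self e hvy hvσ hwy hwσ x

end DualFamilies

theorem comp_val_dotProduct_comp_val {R : Type*} [Mul R] [AddCommMonoid R] {N : ℕ}
    (f g : ℕ → R) :
    (f ∘ Fin.val : Fin N → R) ⬝ᵥ (g ∘ Fin.val) = ∑ k ∈ Finset.range N, f k * g k :=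
  Fin.sum_univ_eq_sum_range (fun k => f k * g k) N

theorem single_comp_val_dotProduct {R : Type*} [NonAssocSemiring R] {N a : ℕ} (ha : a < N)
    (f : ℕ → R) : (Pi.single a 1 ∘ Fin.val : Fin N → R) ⬝ᵥ (f ∘ Fin.val) = f a := by
  simp [comp_val_dotProduct_comp_val, Pi.single_apply, ha]

def basisSeq (i : ℕ) : ℕ → ℤ :=
  if i < 2 then Pi.single i 1 - Pi.single (i + 1) 1
  else if i = 2 then Pi.single 3 1 - Pi.single 0 1 - Pi.single 1 1
  else Pi.single (i + 1) 1 - Pi.single i 1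

/- `x ↦ x ⬝ᵥ dualSeq j` is the `j`-th coordinate of `x ∈ σ^⊥` with respect to the vectors
`basisSeq i`, found by solving `x = ∑ cᵢ • basisSeq i` for the `cᵢ`. -/
def dualSeq (j k : ℕ) : ℤ :=
  if j = 0 then (if k = 0 ∨ 3 ≤ k then 1 else 0)
  else if j = 1 then (if k = 2 then -1 else 0)
  else if j < k then 1 else 0

def sigmaSeq (k : ℕ) : ℤ := if k ≤ 2 then 1 else 2

theorem basisSeq_comp_val_dotProduct {N i : ℕ} (hi : i + 1 < N) (hN : 3 < N) (f : ℕ → ℤ) :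
    (basisSeq i ∘ Fin.val : Fin N → ℤ) ⬝ᵥ (f ∘ Fin.val) =
      if i < 2 then f i - f (i + 1)
      else if i = 2 then f 3 - f 0 - f 1
      else f (i + 1) - f i := by
  have h0 : 0 < N := by omega
  have h1 : 1 < N := by omega
  unfold basisSeq
  split_ifs <;>
    simp [Pi.sub_comp, sub_dotProduct, single_comp_val_dotProduct, *, Nat.lt_of_succ_lt hi]

section Coordinates

variable {m : ℕ}

theorem basisSeq_dotProduct_dualSeq (i j : Fin (m + 3)) :
    (basisSeq i ∘ Fin.val : Fin (m + 4) → ℤ) ⬝ᵥ (dualSeq j ∘ Fin.val) =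
      if i = j then 1 else 0 := by
  rw [basisSeq_comp_val_dotProduct (by omega) (by omega)]
  simp only [dualSeq, Fin.ext_iff]
  grind

theorem basisSeq_dotProduct_sigmaSeq (i : Fin (m + 3)) :
    (basisSeq i ∘ Fin.val : Fin (m + 4) → ℤ) ⬝ᵥ (sigmaSeq ∘ Fin.val) = 0 := by
  rw [basisSeq_comp_val_dotProduct (by omega) (by omega)]
  unfold sigmaSeq
  split_ifs <;> omega

theorem single_one_dotProduct_dualSeq (j : Fin (m + 3)) :
    (Pi.single 1 1 ∘ Fin.val : Fin (m + 4) → ℤ) ⬝ᵥ (dualSeq j ∘ Fin.val) = 0 := by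
  rw [single_comp_val_dotProduct (by omega)]
  unfold dualSeq
  grind

theorem single_one_dotProduct_sigmaSeq :
    (Pi.single 1 1 ∘ Fin.val : Fin (m + 4) → ℤ) ⬝ᵥ (sigmaSeq ∘ Fin.val) = 1 := by
  rw [single_comp_val_dotProduct (by omega)]
  rfl

theorem neg_basisSeq_dotProduct_basisSeq (i j : Fin (m + 3)) :
    -((basisSeq i ∘ Fin.val : Fin (m + 4) → ℤ) ⬝ᵥ (basisSeq j ∘ Fin.val)) =
      triM (m + 3) (fun i => if (i : ℕ) = 2 then -3 else -2) i j := by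
  rw [basisSeq_comp_val_dotProduct (by omega) (by omega)]
  simp only [basisSeq, triM, Fin.ext_iff, ite_apply, Pi.sub_apply, Pi.single_apply]
  grind

end Coordinates

theorem stmt_12 (n : ℕ) (hn : 3 ≤ n) (σ : Fin (n + 1) → ℤ)
    (hσ : ∀ i, σ i = if (i : ℕ) ≤ 2 then 1 else 2) :
    ∃ v : Fin n → (Fin (n + 1) → ℤ),
      LinearIndependent ℤ v ∧
      (∀ x : Fin (n + 1) → ℤ,
        x ∈ Submodule.span ℤ (Set.range v) ↔ -(∑ i, x i * σ i) = 0) ∧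
      ∀ i j : Fin n,
        -(∑ k, v i k * v j k) = triM n (fun i => if (i : ℕ) = 2 then -3 else -2) i j := by
  obtain ⟨m, rfl⟩ : ∃ m, n = m + 3 := ⟨n - 3, by omega⟩
  obtain rfl : σ = sigmaSeq ∘ Fin.val := funext hσ
  refine ⟨fun i => basisSeq i ∘ Fin.val,
    linearIndependent_of_dotProduct_eq_ite basisSeq_dotProduct_dualSeq, fun x => ?_,
    neg_basisSeq_dotProduct_basisSeq⟩
  rw [neg_eq_zero]
  exact mem_span_range_iff_dotProduct_eq_zero (finSuccEquiv _).symm basisSeq_dotProduct_dualSeq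
    basisSeq_dotProduct_sigmaSeq single_one_dotProduct_dualSeq single_one_dotProduct_sigmaSeq x
end

section
/- If p/q = [x_1, ..., x_n]^- with all x_i ≥ 2 integers, then the tridiagonal matrix with diagonal entries −x_1, ..., −x_n and sub/super-diagonal entries 1 is negative definite, and its determinant has absolute value p. -/
/-!
By Laplace expansion along the first row, the determinant of the tridiagonal matrix with
diagonal `d` obeys the three-term recurrence `K(a :: b :: l) = a K(b :: l) - K(l)` of the
continuants of negative continued fractions, and `[l]^- = K(l) / K(l.tail)`. Consecutive
continuants are coprime, and positive when all entries are `≥ 2`, so `p = K(x)`, while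
negating the diagonal only changes the sign of the determinant.

When all diagonal entries are `≤ -2`, the quadratic form is at most
`-(y₀² + yₙ² + ∑ₖ (yₖ - yₖ₊₁)²)`, which vanishes only at `y = 0`.
-/

open Finset

def continuant : List ℤ → ℤ
  | [] => 1
  | [a] => a
  | a :: b :: l => a * continuant (b :: l) - continuant l

theorem one_le_continuant_tail_le_continuant :
    ∀ l : List ℤ, (∀ a ∈ l, 2 ≤ a) → 1 ≤ continuant l.tail ∧ continuant l.tail ≤ continuant l
  | [], _ => by simp [continuant]
  | [a], h => by
    have := h a (by simp)
    simp only [continuant, List.tail_cons]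
    omega
  | a :: b :: l, h => by
    obtain ⟨h₁, h₂⟩ := one_le_continuant_tail_le_continuant (b :: l) fun c hc => h c (by simp [hc])
    have ha := h a (by simp)
    simp only [List.tail_cons] at h₁ h₂ ⊢
    simp only [continuant]
    constructor <;> nlinarith

theorem continuant_pos {l : List ℤ} (h : ∀ a ∈ l, 2 ≤ a) : 0 < continuant l := by
  have := one_le_continuant_tail_le_continuant l h
  omega

theorem isCoprime_continuant_tail : ∀ l : List ℤ, IsCoprime (continuant l) (continuant l.tail)
  | [] => isCoprime_one_left
  | [_] => isCoprime_one_right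
  | a :: b :: l => by
    have := (isCoprime_continuant_tail (b :: l)).symm.neg_left.add_mul_right_left a
    simpa only [continuant, List.tail_cons, neg_add_eq_sub, mul_comm] using this

theorem continuant_map_neg : ∀ l : List ℤ, continuant (l.map (-·)) = (-1) ^ l.length * continuant l
  | [] => by simp [continuant]
  | [a] => by simp [continuant]
  | a :: b :: l => by
    have h₁ := continuant_map_neg (b :: l)
    have h₂ := continuant_map_neg l
    simp only [List.map_cons, List.length_cons] at h₁ ⊢
    simp only [continuant, h₁, h₂]
    ring

theorem ncf_eq_continuant_div :
    ∀ l : List ℤ, l ≠ [] → (∀ a ∈ l, 2 ≤ a) → ncf l = continuant l / continuant l.tail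
  | [a], _, _ => by simp [ncf, continuant]
  | a :: b :: l, _, h => by
    have h' : ∀ c ∈ b :: l, 2 ≤ c := fun c hc => h c (by simp [hc])
    have hpos : (0 : ℚ) < continuant (b :: l) := by exact_mod_cast continuant_pos h'
    rw [ncf.eq_3 a (b :: l) (List.cons_ne_nil b l), ncf_eq_continuant_div (b :: l) (by simp) h',
      one_div_div]
    simp only [continuant, List.tail_cons]
    field_simp
    push_cast
    ring

theorem triM_apply {n : ℕ} (d : Fin n → ℤ) (i j : Fin n) :
    triM n d i j
      = if (i : ℕ) = j then d i else if (i : ℕ) = j + 1 ∨ (j : ℕ) = i + 1 then 1 else 0 := by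
  simp only [triM, Fin.ext_iff]
  split_ifs <;> first | rfl | omega

theorem triM_submatrix_succ {n : ℕ} (d : Fin (n + 1) → ℤ) :
    (triM (n + 1) d).submatrix Fin.succ Fin.succ = triM n (Fin.tail d) := by
  ext i j
  simp only [Matrix.submatrix_apply, triM_apply, Fin.val_succ, Fin.tail]
  split_ifs <;> first | rfl | omega

theorem det_triM_succ_succ {n : ℕ} (d : Fin (n + 2) → ℤ) :
    (triM (n + 2) d).det = d 0 * (triM (n + 1) (Fin.tail d)).det
      - (triM n (Fin.tail (Fin.tail d))).det := by
  -- Expand along the first row: only columns 0 and 1 contribute, and the minor of the entry in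
  -- column 1 has first column (1, 0, …, 0).
  have hminor : ((triM (n + 2) d).submatrix Fin.succ (Fin.succAbove 1)).det
      = (triM n (Fin.tail (Fin.tail d))).det := by
    have hcol : Fin.succAbove (1 : Fin (n + 2)) ∘ Fin.succ = Fin.succ ∘ Fin.succ := by
      ext j; simp [Fin.succAbove, Fin.lt_def]
    have hsub : ((triM (n + 2) d).submatrix Fin.succ (Fin.succAbove 1)).submatrix
        (Fin.succAbove 0) Fin.succ = triM n (Fin.tail (Fin.tail d)) := by
      rw [Fin.succAbove_zero, Matrix.submatrix_submatrix, hcol, ← Matrix.submatrix_submatrix,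
        triM_submatrix_succ, triM_submatrix_succ]
    rw [Matrix.det_succ_column_zero, Fin.sum_univ_succ, hsub]
    simp [triM_apply, Fin.succAbove]
  rw [Matrix.det_succ_row_zero, Fin.sum_univ_succ, Fin.sum_univ_succ, Fin.succAbove_zero,
    triM_submatrix_succ, Fin.succ_zero_eq_one, hminor]
  simp [triM_apply]
  ring

theorem det_triM : ∀ (n : ℕ) (d : Fin n → ℤ), (triM n d).det = continuant (List.ofFn d)
  | 0, _ => by simp [continuant]
  | 1, d => by simp [triM_apply, continuant]
  | n + 2, d => by
    rw [det_triM_succ_succ, det_triM (n + 1), det_triM n]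
    simp only [List.ofFn_succ, continuant]
    rfl

theorem sum_sum_ite_val_eq_val_add_one {R : Type*} [AddCommMonoid R] {n : ℕ}
    (f : Fin (n + 1) → Fin (n + 1) → R) :
    ∑ i : Fin (n + 1), ∑ j : Fin (n + 1), (if (j : ℕ) = (i : ℕ) + 1 then f i j else 0)
      = ∑ k : Fin n, f k.castSucc k.succ := by
  calc ∑ i : Fin (n + 1), ∑ j : Fin (n + 1), (if (j : ℕ) = (i : ℕ) + 1 then f i j else 0)
      = ∑ i : Fin (n + 1), ∑ k : Fin n, (if i = k.castSucc then f i k.succ else 0) := by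
        refine sum_congr rfl fun i _ => ?_
        rw [Fin.sum_univ_succ, if_neg (by simp)]
        simp only [Fin.val_succ, Nat.add_right_cancel_iff, zero_add]
        exact sum_congr rfl fun k _ => if_congr (by rw [Fin.ext_iff, Fin.val_castSucc, eq_comm])
          rfl rfl
    _ = ∑ k : Fin n, f k.castSucc k.succ := by
        rw [sum_comm]
        simp

theorem sum_mul_triM_mul {R : Type*} [CommRing R] {n : ℕ} (d : Fin (n + 1) → ℤ)
    (y : Fin (n + 1) → R) :
    ∑ i, ∑ j, y i * (triM (n + 1) d i j : R) * y j
      = ∑ i, d i * y i ^ 2 + 2 * ∑ k : Fin n, y k.castSucc * y k.succ := by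
  have hentry : ∀ i j, y i * (triM (n + 1) d i j : R) * y j
      = ((if i = j then d i * y i ^ 2 else 0) + (if (j : ℕ) = (i : ℕ) + 1 then y i * y j else 0))
        + (if (i : ℕ) = (j : ℕ) + 1 then y j * y i else 0) := fun i j => by
    rcases eq_or_ne i j with rfl | hij
    · simp [triM_apply]
      ring
    · have hij' : (i : ℕ) ≠ j := Fin.val_injective.ne hij
      rw [triM_apply, if_neg hij', if_neg hij]
      split_ifs <;> first | (push_cast; ring1) | (exfalso; omega)
  simp only [hentry, sum_add_distrib, sum_ite_eq, mem_univ, if_true,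
    sum_sum_ite_val_eq_val_add_one]
  rw [sum_comm (f := fun i j : Fin (n + 1) => if (i : ℕ) = (j : ℕ) + 1 then y j * y i else 0),
    sum_sum_ite_val_eq_val_add_one]
  ring

theorem two_mul_sum_sq_sub_two_mul_sum_mul_succ {R : Type*} [CommRing R] {n : ℕ}
    (y : Fin (n + 1) → R) :
    2 * ∑ i, y i ^ 2 - 2 * ∑ k : Fin n, y k.castSucc * y k.succ
      = y 0 ^ 2 + y (Fin.last n) ^ 2 + ∑ k : Fin n, (y k.castSucc - y k.succ) ^ 2 := by
  have hinit := Fin.sum_univ_castSucc (fun i => y i ^ 2)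
  have htail := Fin.sum_univ_succ (fun i => y i ^ 2)
  simp only [sub_sq, sum_add_distrib, sum_sub_distrib, mul_assoc, ← mul_sum]
  linear_combination hinit + htail

theorem eq_zero_of_sq_add_sum_sq_sub_eq_zero {R : Type*} [CommRing R] [LinearOrder R]
    [IsStrictOrderedRing R] {n : ℕ} {y : Fin (n + 1) → R}
    (h : y 0 ^ 2 + ∑ k : Fin n, (y k.castSucc - y k.succ) ^ 2 = 0) : y = 0 := by
  rw [add_eq_zero_iff_of_nonneg (sq_nonneg _) (sum_nonneg fun k _ => sq_nonneg _),
    sum_eq_zero_iff_of_nonneg fun k _ => sq_nonneg _] at h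
  obtain ⟨h0, hsucc⟩ := h
  funext i
  induction i using Fin.induction with
  | zero => exact pow_eq_zero_iff two_ne_zero |>.mp h0
  | succ k ih => simpa [sub_eq_zero.mp (pow_eq_zero_iff two_ne_zero |>.mp (hsucc k (mem_univ k)))]
      using ih

theorem sum_mul_triM_mul_neg {R : Type*} [CommRing R] [LinearOrder R] [IsStrictOrderedRing R]
    {n : ℕ} (d : Fin (n + 1) → ℤ) (hd : ∀ i, d i ≤ -2) {y : Fin (n + 1) → R} (hy : y ≠ 0) :
    ∑ i, ∑ j, y i * (triM (n + 1) d i j : R) * y j < 0 := by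
  have hdiag : ∑ i, (d i : R) * y i ^ 2 ≤ ∑ i, -2 * y i ^ 2 :=
    sum_le_sum fun i _ => mul_le_mul_of_nonneg_right (by exact_mod_cast hd i) (sq_nonneg _)
  have hpos : 0 < y 0 ^ 2 + ∑ k : Fin n, (y k.castSucc - y k.succ) ^ 2 :=
    (add_nonneg (sq_nonneg _) (sum_nonneg fun k _ => sq_nonneg _)).lt_of_ne
      fun h => hy (eq_zero_of_sq_add_sum_sq_sub_eq_zero h.symm)
  have hsq := two_mul_sum_sq_sub_two_mul_sum_mul_succ y
  rw [sum_mul_triM_mul, ← mul_sum] at *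
  nlinarith [sq_nonneg (y (Fin.last n))]

theorem stmt_17_general (m : ℕ) (hm : 1 ≤ m) (x : Fin m → ℤ) (hx : ∀ i, 2 ≤ x i)
    (p q : ℤ) (hq : 0 < q) (hcop : IsCoprime p q)
    (hcf : ncf (List.ofFn x) = (p : ℚ) / q) :
    (∀ y : Fin m → ℚ, y ≠ 0 →
      ∑ i, ∑ j, y i * (triM m (fun i => -x i) i j : ℚ) * y j < 0) ∧
    |(triM m (fun i => -x i)).det| = p := by
  obtain ⟨n, rfl⟩ := Nat.exists_eq_add_of_le' hm
  have hx' : ∀ a ∈ List.ofFn x, 2 ≤ a := fun a ha => by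
    obtain ⟨i, rfl⟩ := List.mem_ofFn.mp ha
    exact hx i
  refine ⟨fun y hy => sum_mul_triM_mul_neg _ (fun i => by linarith [hx i]) hy, ?_⟩
  have hp : p = continuant (List.ofFn x) := by
    rw [← Rat.num_div_eq_of_coprime hq (Int.isCoprime_iff_gcd_eq_one.mp hcop), ← hcf,
      ncf_eq_continuant_div _ (by simp) hx', Rat.num_div_eq_of_coprime
        (continuant_pos fun a ha => hx' a (List.mem_of_mem_tail ha))
        (Int.isCoprime_iff_gcd_eq_one.mp (isCoprime_continuant_tail _))]
  rw [det_triM, show List.ofFn (fun i => -x i) = (List.ofFn x).map (-·) from List.map_ofFn.symm,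
    continuant_map_neg, abs_mul, abs_pow, abs_neg, abs_one, one_pow, one_mul,
    abs_of_pos (continuant_pos hx'), hp]

theorem stmt_17 (m : ℕ) (hm : 1 ≤ m) (x : Fin m → ℤ) (hx : ∀ i, 2 ≤ x i)
    (p q : ℤ) (hq : 0 < q) (hpq : q < p) (hcop : IsCoprime p q)
    (hcf : ncf (List.ofFn x) = (p : ℚ) / q) :
    (∀ y : Fin m → ℚ, y ≠ 0 →
      ∑ i, ∑ j, y i * (triM m (fun i => -x i) i j : ℚ) * y j < 0) ∧
    |(triM m (fun i => -x i)).det| = p :=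
  stmt_17_general m hm x hx p q hq hcop hcf
end
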